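/- Let $R = k[x_1,\dots,x_m]$, let $I$ be a ${}^*$strongly Golod monomial ideal (i.e. $\partial^*(I)^2 \subseteq I$), and let $L$ be a monomial ideal such that $I : L = I : L^2$. Then $I : L$ is ${}^*$strongly Golod, i.e. $\partial^*(I : L)^2 \subseteq I : L$. -/

import Mathlib

open MvPolynomial

variable {m : ℕ} {k : Type*}

/-- An ideal of `k[x_1, …, x_m]` is a monomial ideal if it is generated by monomials. -/
def IsMonomialIdeal [Field k] (I : Ideal (MvPolynomial (Fin m) k)) : Prop :=
  ∃ S : Set (Fin m →₀ ℕ), I = Ideal.span ((fun e => monomial e (1 : k)) '' S)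

/-- `e` is the exponent vector of a minimal monomial generator of `I`: the monomial `x^e`
lies in `I` and no proper divisor of it lies in `I`. -/
def IsMinMonomialGen [Field k] (I : Ideal (MvPolynomial (Fin m) k)) (e : Fin m →₀ ℕ) : Prop :=
  monomial e (1 : k) ∈ I ∧ ∀ e' : Fin m →₀ ℕ, e' ≤ e → e' ≠ e → monomial e' (1 : k) ∉ I

/-- `∂*(I)`: the ideal generated by all quotients `f / x_i`, where `f` runs over the minimal
monomial generators of `I` and `x_i` over the variables dividing `f`. -/
noncomputable def partialStar [Field k] (I : Ideal (MvPolynomial (Fin m) k)) :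
    Ideal (MvPolynomial (Fin m) k) :=
  Ideal.span { p | ∃ (e : Fin m →₀ ℕ) (i : Fin m), IsMinMonomialGen I e ∧ e i ≠ 0 ∧
    p = monomial (e - Finsupp.single i 1) (1 : k) }

/-!
For a minimal generator `x^e` of `I : L` with `x_i ∣ x^e` and a monomial `x^t ∈ L`, the monomial
`x^(e + t) / x_i` is divisible by some `x^w / x_j` with `x^w` a minimal generator of `I`, so
`∂*(I : L) · L ⊆ ∂*(I)` when `L` is monomial. Hence
`∂*(I : L)² · L² ⊆ (∂*(I : L) · L)² ⊆ ∂*(I)² ⊆ I`, i.e. `∂*(I : L)² ⊆ I : L² = I : L`.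
-/

theorem Ideal.le_colon_iff_mul_le {R : Type*} [CommSemiring R] {J I N : Ideal R} :
    J ≤ I.colon (N : Set R) ↔ J * N ≤ I := by
  rw [Ideal.mul_le]
  simp only [SetLike.le_def, Submodule.mem_colon, smul_eq_mul, SetLike.mem_coe]

section Monomials

variable [Field k]

theorem monomial_one_mem_of_le {I : Ideal (MvPolynomial (Fin m) k)} {a b : Fin m →₀ ℕ}
    (hab : a ≤ b) (ha : monomial a (1 : k) ∈ I) : monomial b (1 : k) ∈ I :=
  Ideal.mem_of_dvd _ (monomial_dvd_monomial.mpr ⟨Or.inr hab, one_dvd _⟩) ha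

theorem exists_isMinMonomialGen_le (I : Ideal (MvPolynomial (Fin m) k)) {b : Fin m →₀ ℕ}
    (hb : monomial b (1 : k) ∈ I) : ∃ w ≤ b, IsMinMonomialGen I w := by
  induction b using WellFoundedLT.induction with
  | _ b ih =>
    by_cases hmin : ∀ e' ≤ b, e' ≠ b → monomial e' (1 : k) ∉ I
    · exact ⟨b, le_rfl, hb, hmin⟩
    · push Not at hmin
      obtain ⟨e', hle, hne, hmem⟩ := hmin
      obtain ⟨w, hw, hwmin⟩ := ih e' (lt_of_le_of_ne hle hne) hmem
      exact ⟨w, hw.trans hle, hwmin⟩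

theorem IsMinMonomialGen.one_notMem {I : Ideal (MvPolynomial (Fin m) k)} {e : Fin m →₀ ℕ}
    (he : IsMinMonomialGen I e) (he0 : e ≠ 0) : (1 : MvPolynomial (Fin m) k) ∉ I :=
  he.2 0 zero_le he0.symm

/-- Take a minimal generator `x^w ∣ x^b`. If `w_i < b_i` then `x^w` itself divides `x^b / x_i`;
otherwise `w_i = b_i ≠ 0` and `x^w / x_i` divides it. -/
theorem monomial_tsub_single_mem_partialStar {I : Ideal (MvPolynomial (Fin m) k)}
    (hI : (1 : MvPolynomial (Fin m) k) ∉ I) {b : Fin m →₀ ℕ} (hb : monomial b (1 : k) ∈ I)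
    {i : Fin m} (hbi : b i ≠ 0) : monomial (b - Finsupp.single i 1) (1 : k) ∈ partialStar I := by
  obtain ⟨w, hwb, hw⟩ := exists_isMinMonomialGen_le I hb
  have hgen : ∀ j, w j ≠ 0 → monomial (w - Finsupp.single j 1) (1 : k) ∈ partialStar I :=
    fun j hj => Ideal.subset_span ⟨w, j, hw, hj, rfl⟩
  by_cases hwi : w i < b i
  · have hw0 : w ≠ 0 := by
      rintro rfl
      exact hI (by simpa using hw.1)
    obtain ⟨j, hj⟩ := Finsupp.ne_iff.mp hw0
    refine monomial_one_mem_of_le (tsub_le_self.trans fun l => ?_) (hgen j hj)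
    by_cases hl : l = i
    · subst hl
      simp only [Finsupp.coe_tsub, Pi.sub_apply, Finsupp.single_eq_same]
      omega
    · simpa [Finsupp.single_apply, Ne.symm hl] using hwb l
  · refine monomial_one_mem_of_le (tsub_le_tsub_right hwb _) (hgen i ?_)
    omega

theorem partialStar_colon_mul_le {I L : Ideal (MvPolynomial (Fin m) k)}
    (hL : IsMonomialIdeal L) : partialStar (I.colon L) * L ≤ partialStar I := by
  obtain ⟨T, rfl⟩ := hL
  rw [partialStar, Ideal.span_mul_span', Ideal.span_le]
  rintro _ ⟨_, ⟨e, i, he, hei, rfl⟩, _, ⟨t, ht, rfl⟩, rfl⟩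
  have het : monomial (e + t) (1 : k) ∈ I := by
    simpa [monomial_mul] using Submodule.mem_colon.mp he.1 _ (Ideal.subset_span ⟨t, ht, rfl⟩)
  have hI : (1 : MvPolynomial (Fin m) k) ∉ I := fun h =>
    he.one_notMem (fun he0 => hei (by simp [he0])) (Ideal.le_colon h)
  show monomial _ 1 * monomial _ 1 ∈ partialStar I
  rw [monomial_mul, one_mul,
    tsub_add_eq_add_tsub (Finsupp.single_le_iff.mpr (Nat.one_le_iff_ne_zero.mpr hei))]
  exact monomial_tsub_single_mem_partialStar hI het (by simp [hei])

end Monomials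

theorem colon_strongly_golod_general [Field k] (I L : Ideal (MvPolynomial (Fin m) k))
    (hL : IsMonomialIdeal L)
    (hsg : partialStar I * partialStar I ≤ I)
    (hcolon : Submodule.colon I L = Submodule.colon I (L ^ 2 : Ideal (MvPolynomial (Fin m) k))) :
    partialStar (Submodule.colon I L) * partialStar (Submodule.colon I L)
      ≤ Submodule.colon I L := by
  have hstar := partialStar_colon_mul_le (I := I) hL
  refine le_of_le_of_eq (Ideal.le_colon_iff_mul_le.mpr ?_) hcolon.symm
  calc partialStar (I.colon L) * partialStar (I.colon L) * L ^ 2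
      = (partialStar (I.colon L) * L) * (partialStar (I.colon L) * L) := by ring
    _ ≤ partialStar I * partialStar I := mul_le_mul' hstar hstar
    _ ≤ I := hsg

/-- If `I` is a `*`strongly Golod monomial ideal and `L` a monomial ideal with
`I : L = I : L²`, then `I : L` is `*`strongly Golod. -/
theorem colon_strongly_golod [Field k] (I L : Ideal (MvPolynomial (Fin m) k))
    (hI : IsMonomialIdeal I) (hL : IsMonomialIdeal L)
    (hsg : partialStar I * partialStar I ≤ I)
    (hcolon : Submodule.colon I L = Submodule.colon I (L ^ 2 : Ideal (MvPolynomial (Fin m) k))) :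
    partialStar (Submodule.colon I L) * partialStar (Submodule.colon I L)
      ≤ Submodule.colon I L :=
  colon_strongly_golod_general I L hL hsg hcolon
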